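/- arXiv:1311.1298 — 2 statements merged into one kernel-verified Lean document; each statement's English description precedes it below -/
import Mathlib

section
/- With G and G' as in the MCC reduction (base vertices V with distinct colors; for each non-adjacent pair {u,v} two additional vertices u_v, v_u sharing a fresh color, with edges (u,u_v) and (v,v_u)): if there exists a subset E''⊆E' such that every connected component of (V', E'∖E'') is colorful and the number of components is k, then V admits a partition into at most k cliques of G. -/
open scoped Classical

/-- Vertex set of the MCC reduction graph: base vertices plus, for each ordered
pair `(u,v)` of distinct non-adjacent vertices, an additional vertex `u_v`. -/
def mccVert {V : Type*} (G : SimpleGraph V) : Type _ :=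
  V ⊕ {p : V × V // p.1 ≠ p.2 ∧ ¬ G.Adj p.1 p.2}

/-- Coloring of the MCC reduction graph: each base vertex gets its own color;
the additional vertices `u_v` and `v_u` share the color `s(u,v)`. -/
def mccColor {V : Type*} (G : SimpleGraph V) : mccVert G → V ⊕ Sym2 V
  | Sum.inl u => Sum.inl u
  | Sum.inr p => Sum.inr (Sym2.mk p.val.1 p.val.2)

/-- Edges of the MCC reduction graph: the base edges of `G`, plus an edge from
each additional vertex `u_v` to the base vertex `u`. -/
def mccGraph {V : Type*} (G : SimpleGraph V) : SimpleGraph (mccVert G) :=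
  SimpleGraph.fromRel (fun x y =>
    match x, y with
    | Sum.inl u, Sum.inl w => G.Adj u w
    | Sum.inl u, Sum.inr p => p.val.1 = u
    | _, _ => False)

/-!
Send each vertex `u` of `G` to a connected component of `H`: to the component of a leaf `u_v`
that `H` has detached from `u` if there is one, and to the component of `u` otherwise. A detached
leaf is a component on its own, so no two vertices share such a component. Two vertices `u ≠ v`
that keep all their leaves and lie in one component are adjacent in `G`: otherwise the path
`u_v, u, …, v, v_u` would join two vertices of the same color.
-/

theorem SimpleGraph.IsIsolated.eq_of_reachable {W : Type*} {Γ : SimpleGraph W} {v w : W}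
    (hv : Γ.IsIsolated v) (hr : Γ.Reachable v w) : v = w := by
  obtain ⟨p⟩ := hr
  cases p with
  | nil => rfl
  | cons h _ => exact (hv _ h).elim

namespace MCC

variable {V : Type*} {G : SimpleGraph V}

abbrev NonEdge (G : SimpleGraph V) : Type _ := {p : V × V // p.1 ≠ p.2 ∧ ¬ G.Adj p.1 p.2}

def NonEdge.swap (p : NonEdge G) : NonEdge G :=
  ⟨p.1.swap, p.2.1.symm, fun h => p.2.2 h.symm⟩

instance [Finite V] : Finite (mccVert G) := inferInstanceAs (Finite (V ⊕ NonEdge G))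

def base (u : V) : mccVert G := Sum.inl u

/-- The vertex `u_v` for `p = (u, v)`. -/
def leaf (p : NonEdge G) : mccVert G := Sum.inr p

def anchor : mccVert G → V
  | Sum.inl u => u
  | Sum.inr p => p.1.1

@[simp] theorem anchor_leaf (p : NonEdge G) : anchor (leaf p) = p.1.1 := rfl

def IsColorful (H : SimpleGraph (mccVert G)) : Prop :=
  ∀ x y : mccVert G, H.Reachable x y → mccColor G x = mccColor G y → x = y

theorem mccGraph_adj_leaf_iff (p : NonEdge G) (y : mccVert G) :
    (mccGraph G).Adj (leaf p) y ↔ y = base p.1.1 := by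
  rw [mccGraph, SimpleGraph.fromRel_adj]
  rcases y with w | q <;> simp [leaf, base, mccVert, eq_comm]

theorem isIsolated_leaf {H : SimpleGraph (mccVert G)} (hH : H ≤ mccGraph G) {p : NonEdge G}
    (hp : ¬ H.Adj (base p.1.1) (leaf p)) : H.IsIsolated (leaf p) := by
  intro y hy
  obtain rfl := (mccGraph_adj_leaf_iff p y).1 (hH hy)
  exact hp hy.symm

theorem not_adj_leaf_or_not_adj_leaf_swap {H : SimpleGraph (mccVert G)} (hcol : IsColorful H)
    (p : NonEdge G) (hr : H.Reachable (base p.1.1) (base p.1.2)) :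
    ¬ H.Adj (base p.1.1) (leaf p) ∨ ¬ H.Adj (base p.1.2) (leaf p.swap) := by
  by_contra! ⟨hp, hq⟩
  have hsame : mccColor G (leaf p) = mccColor G (leaf p.swap) := by
    simp [mccColor, leaf, NonEdge.swap, Sym2.eq_swap]
  have heq := hcol _ _ (hp.symm.reachable.trans (hr.trans hq.reachable)) hsame
  exact p.2.1 (by simpa [NonEdge.swap] using congrArg anchor heq)

def HasDetachedLeaf (H : SimpleGraph (mccVert G)) (u : V) : Prop :=
  ∃ p : NonEdge G, p.1.1 = u ∧ ¬ H.Adj (base u) (leaf p)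

noncomputable def rep (H : SimpleGraph (mccVert G)) (u : V) : mccVert G :=
  if h : HasDetachedLeaf H u then leaf h.choose else base u

variable {H : SimpleGraph (mccVert G)}

@[simp] theorem anchor_rep (u : V) : anchor (rep H u) = u := by
  unfold rep
  split_ifs with h
  · exact h.choose_spec.1
  · rfl

theorem rep_eq_of_reachable (hH : H ≤ mccGraph G) {u : V} {y : mccVert G}
    (hu : HasDetachedLeaf H u) (hr : H.Reachable (rep H u) y) : rep H u = y := by
  rw [rep, dif_pos hu] at hr ⊢
  obtain ⟨hp, hadj⟩ := hu.choose_spec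
  exact (isIsolated_leaf hH (hp.symm ▸ hadj)).eq_of_reachable hr

theorem adj_of_reachable_rep (hH : H ≤ mccGraph G) (hcol : IsColorful H) {u v : V} (huv : u ≠ v) (hr : H.Reachable (rep H u) (rep H v)) : G.Adj u v := by
  by_contra hG
  by_cases hu : HasDetachedLeaf H u
  · exact huv (by simpa using congrArg anchor (rep_eq_of_reachable hH hu hr))
  by_cases hv : HasDetachedLeaf H v
  · exact huv.symm (by simpa using congrArg anchor (rep_eq_of_reachable hH hv hr.symm))
  rw [rep, dif_neg hu, rep, dif_neg hv] at hr
  rcases not_adj_leaf_or_not_adj_leaf_swap hcol ⟨(u, v), huv, hG⟩ hr with h | h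
  · exact hu ⟨_, rfl, h⟩
  · exact hv ⟨_, rfl, h⟩

end MCC

theorem stmt7_general {V : Type*} [Fintype V] (G : SimpleGraph V)
    (H : SimpleGraph (mccVert G)) (hH : H ≤ mccGraph G)
    (hcol : ∀ x y : mccVert G, H.Reachable x y → mccColor G x = mccColor G y → x = y)
    (k : ℕ) (hk : Nat.card H.ConnectedComponent = k) :
    ∃ P : V → Fin k, ∀ u v : V, P u = P v → u ≠ v → G.Adj u v := by
  let e : H.ConnectedComponent ≃ Fin k := Finite.equivFinOfCardEq hk
  refine ⟨fun u => e (H.connectedComponentMk (MCC.rep H u)), fun u v hP huv => ?_⟩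
  exact MCC.adj_of_reachable_rep hH hcol huv
    (SimpleGraph.ConnectedComponent.eq.mp (e.injective hP))

/-- If some subgraph of the MCC reduction graph has all components colorful and
exactly `k` connected components, then `G` can be partitioned into at most `k`
cliques. -/
theorem stmt7 {V : Type*} [Fintype V] [DecidableEq V] (G : SimpleGraph V)
    (H : SimpleGraph (mccVert G)) (hH : H ≤ mccGraph G)
    (hcol : ∀ x y : mccVert G, H.Reachable x y → mccColor G x = mccColor G y → x = y)
    (k : ℕ) (hk : Nat.card H.ConnectedComponent = k) :
    ∃ P : V → Fin k, ∀ u v : V, P u = P v → u ≠ v → G.Adj u v :=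
  stmt7_general G H hH hcol k hk
end

section
/- With G and G' as in the MCC reduction, the minimum number of cliques in a clique partition of G equals the minimum, over all subsets E''⊆E' such that every connected component of (V', E'∖E'') is colorful, of the number of connected components of (V', E'∖E''). -/
/-!
A clique partition `P` of `G` gives the subgraph of `G'` that keeps exactly the edges inside the
classes of `P`, each pendant `u_v` following its base vertex `u`. Its components are the classes,
and it is colorful because `u_v` and `v_u` share a component only when `P u = P v`, which forces
`u` and `v` to be adjacent.

Conversely, let `H` be a colorful subgraph of `G'`. Send `u` to the component of a pendant `u_v`
detached from `u`, if there is one (it is then a singleton component), and to the component of `u`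
otherwise. Two distinct vertices sent to the same component are adjacent in `G`: otherwise both
keep all their pendants, and `u_v`, `v_u` would be two vertices of one color in one component.
-/

open scoped Classical

namespace SimpleGraph

variable {α β : Type*} {H : SimpleGraph α} {x y : α}

theorem Reachable.apply_eq_of_adj {f : α → β} (h : ∀ a b, H.Adj a b → f a = f b)
    (hr : H.Reachable x y) : f x = f y := by
  obtain ⟨w⟩ := hr
  induction w with
  | nil => rfl
  | cons ha _ ih => exact (h _ _ ha).trans ih

theorem Reachable.eq_of_forall_not_adj (h : ∀ z, ¬ H.Adj x z) (hr : H.Reachable x y) :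
    x = y := by
  by_contra hne
  obtain ⟨z, hz⟩ := hr.nonempty_neighborSet_left hne
  exact h z hz

def IsColorful (H : SimpleGraph α) (c : α → β) : Prop :=
  ∀ x y, H.Reachable x y → c x = c y → x = y

end SimpleGraph

open SimpleGraph

section MCC

variable {V : Type*} {G : SimpleGraph V}

/-- `p` indexes the pendant vertex `u_v` of the paper, with `u = p.1.1` and `v = p.1.2`. -/
abbrev NonAdjPair (G : SimpleGraph V) : Type _ :=
  {p : V × V // p.1 ≠ p.2 ∧ ¬ G.Adj p.1 p.2}

def NonAdjPair.swap (p : NonAdjPair G) : NonAdjPair G :=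
  ⟨p.1.swap, p.2.1.symm, fun h => p.2.2 h.symm⟩

theorem mccGraph_adj_inl_inl {u w : V} :
    (mccGraph G).Adj (Sum.inl u) (Sum.inl w) ↔ G.Adj u w :=
  (fromRel_adj _ _ _).trans
    ⟨fun h => h.2.elim id .symm, fun h => ⟨fun e => h.ne (Sum.inl_injective e), .inl h⟩⟩

theorem mccGraph_adj_inl_inr {u : V} {p : NonAdjPair G} :
    (mccGraph G).Adj (Sum.inl u) (Sum.inr p) ↔ p.1.1 = u :=
  (fromRel_adj _ _ _).trans
    ⟨fun h => h.2.elim id False.elim, fun h => ⟨Sum.inl_ne_inr, .inl h⟩⟩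

theorem mccGraph_adj_inr {p : NonAdjPair G} {y : mccVert G} :
    (mccGraph G).Adj (Sum.inr p) y ↔ y = Sum.inl p.1.1 := by
  refine ((mccGraph G).adj_comm _ _).trans ?_
  rcases y with w | q
  · exact mccGraph_adj_inl_inr.trans
      ⟨fun h => congrArg Sum.inl h.symm, fun h => (Sum.inl_injective h).symm⟩
  · exact (fromRel_adj _ _ _).trans
      ⟨fun h => h.2.elim False.elim False.elim, fun h => (Sum.inr_ne_inl h).elim⟩

theorem mccColor_inr_eq_inr_iff {p q : NonAdjPair G} :
    mccColor G (Sum.inr p) = mccColor G (Sum.inr q) ↔ q = p ∨ q = p.swap := by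
  simp only [mccColor, Sum.inr.injEq, Sym2.eq_iff, NonAdjPair.swap, Subtype.ext_iff,
    Prod.ext_iff, Prod.fst_swap, Prod.snd_swap]
  tauto

theorem mccColor_eq_inl_iff {x : mccVert G} {u : V} :
    mccColor G x = mccColor G (Sum.inl u) ↔ x = Sum.inl u := by
  rcases x with w | p
  · exact Sum.inl.inj_iff.trans ⟨fun h => congrArg Sum.inl h, fun h => Sum.inl_injective h⟩
  · exact ⟨fun h => (Sum.inr_ne_inl h).elim, fun h => (Sum.inr_ne_inl h).elim⟩

def IsCliquePartition {ι : Type*} (G : SimpleGraph V) (P : V → ι) : Prop :=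
  ∀ u v, P u = P v → u ≠ v → G.Adj u v

theorem isCliquePartition_of_injective {ι : Type*} {P : V → ι} (hP : P.Injective) :
    IsCliquePartition G P :=
  fun _ _ h hne => (hne (hP h)).elim

def baseVertex : mccVert G → V :=
  Sum.elim id fun p => p.1.1

section ClassSubgraph

variable {ι : Type*} {P : V → ι}

def classSubgraph (G : SimpleGraph V) (P : V → ι) : SimpleGraph (mccVert G) where
  Adj x y := (mccGraph G).Adj x y ∧ P (baseVertex x) = P (baseVertex y)
  symm := ⟨fun _ _ h => ⟨h.1.symm, h.2.symm⟩⟩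
  loopless := ⟨fun _ h => h.1.ne rfl⟩

theorem classSubgraph_adj {x y : mccVert G} :
    (classSubgraph G P).Adj x y ↔ (mccGraph G).Adj x y ∧ P (baseVertex x) = P (baseVertex y) :=
  Iff.rfl

theorem classSubgraph_le : classSubgraph G P ≤ mccGraph G :=
  fun _ _ h => (classSubgraph_adj.1 h).1

theorem reachable_classSubgraph_inl_baseVertex (x : mccVert G) :
    (classSubgraph G P).Reachable x (Sum.inl (baseVertex x)) := by
  rcases x with u | p
  · rfl
  · exact Adj.reachable (classSubgraph_adj.2 ⟨mccGraph_adj_inr.2 rfl, rfl⟩)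

theorem reachable_classSubgraph_iff (hP : IsCliquePartition G P) {x y : mccVert G} :
    (classSubgraph G P).Reachable x y ↔ P (baseVertex x) = P (baseVertex y) := by
  refine ⟨Reachable.apply_eq_of_adj fun _ _ h => (classSubgraph_adj.1 h).2, fun h => ?_⟩
  refine (reachable_classSubgraph_inl_baseVertex x).trans
    (Reachable.trans ?_ (reachable_classSubgraph_inl_baseVertex y).symm)
  by_cases hxy : baseVertex x = baseVertex y
  · rw [hxy]; rfl
  · exact Adj.reachable (classSubgraph_adj.2 ⟨mccGraph_adj_inl_inl.2 (hP _ _ h hxy), h⟩)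

theorem isColorful_classSubgraph (hP : IsCliquePartition G P) :
    (classSubgraph G P).IsColorful (mccColor G) := by
  intro x y hr hc
  rcases y with u | q
  · exact mccColor_eq_inl_iff.1 hc
  rcases x with u | p
  · exact (mccColor_eq_inl_iff.1 hc.symm).symm
  rcases mccColor_inr_eq_inr_iff.1 hc with rfl | rfl
  · rfl
  · exact (p.2.2 (hP _ _ ((reachable_classSubgraph_iff hP).1 hr) p.2.1)).elim

theorem card_connectedComponent_classSubgraph_le [Finite ι] (hP : IsCliquePartition G P) :
    Nat.card (classSubgraph G P).ConnectedComponent ≤ Nat.card ι := by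
  refine Nat.card_le_card_of_injective
    (ConnectedComponent.lift (P ∘ baseVertex) fun _ _ w _ =>
      (reachable_classSubgraph_iff hP).1 w.reachable) ?_
  rintro ⟨x⟩ ⟨y⟩ h
  exact ConnectedComponent.sound ((reachable_classSubgraph_iff hP).2 h)

end ClassSubgraph

instance [Finite V] : Finite (mccVert G) := by
  unfold mccVert; infer_instance

section ColorfulSubgraph

variable {H : SimpleGraph (mccVert G)} {u v : V}

noncomputable def representative (H : SimpleGraph (mccVert G)) (u : V) : mccVert G :=
  if h : ∃ p : NonAdjPair G, p.1.1 = u ∧ ¬ H.Adj (Sum.inl u) (Sum.inr p) then Sum.inr h.choose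
  else Sum.inl u

theorem baseVertex_representative : baseVertex (representative H u) = u := by
  by_cases h : ∃ p : NonAdjPair G, p.1.1 = u ∧ ¬ H.Adj (Sum.inl u) (Sum.inr p)
  · rw [show representative H u = Sum.inr h.choose from dif_pos h]
    exact h.choose_spec.1
  · rw [show representative H u = Sum.inl u from dif_neg h]
    rfl

theorem representative_injective : Function.Injective (representative H) :=
  Function.LeftInverse.injective fun _ => baseVertex_representative

theorem representative_cases (hle : H ≤ mccGraph G) :
    (∀ z, ¬ H.Adj (representative H u) z) ∨
      representative H u = Sum.inl u ∧
        ∀ p : NonAdjPair G, p.1.1 = u → H.Adj (Sum.inl u) (Sum.inr p) := by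
  by_cases h : ∃ p : NonAdjPair G, p.1.1 = u ∧ ¬ H.Adj (Sum.inl u) (Sum.inr p)
  · obtain ⟨hpu, hp_detached⟩ := h.choose_spec
    refine .inl fun z hz => hp_detached ?_
    rw [show representative H u = Sum.inr h.choose from dif_pos h] at hz
    have hz' : z = Sum.inl u := (mccGraph_adj_inr.1 (hle hz)).trans (congrArg Sum.inl hpu)
    exact hz' ▸ hz.symm
  · refine .inr ⟨dif_neg h, fun p hp => ?_⟩
    by_contra hp_detached
    exact h ⟨p, hp, hp_detached⟩

theorem adj_of_reachable_representative (hle : H ≤ mccGraph G) (hH : H.IsColorful (mccColor G))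
    (huv : u ≠ v) (hr : H.Reachable (representative H u) (representative H v)) : G.Adj u v := by
  rcases representative_cases (u := u) hle with hu | ⟨hu, hu_att⟩
  · exact (huv (representative_injective (hr.eq_of_forall_not_adj hu))).elim
  rcases representative_cases (u := v) hle with hv | ⟨hv, hv_att⟩
  · exact (huv (representative_injective (hr.symm.eq_of_forall_not_adj hv).symm)).elim
  by_contra hadj
  rw [hu, hv] at hr
  let p : NonAdjPair G := ⟨(u, v), huv, hadj⟩
  have hpq : Sum.inr p = Sum.inr p.swap :=
    hH _ _ ((hu_att p rfl).symm.reachable.trans (hr.trans (hv_att p.swap rfl).reachable))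
      (mccColor_inr_eq_inr_iff.2 (.inr rfl))
  exact huv (congrArg (fun r : NonAdjPair G => r.1.1) (Sum.inr_injective hpq))

theorem exists_isCliquePartition_of_isColorful [Finite V] (hle : H ≤ mccGraph G)
    (hH : H.IsColorful (mccColor G)) :
    ∃ P : V → Fin (Nat.card H.ConnectedComponent), IsCliquePartition G P :=
  ⟨fun u => Finite.equivFin _ (H.connectedComponentMk (representative H u)), fun _ _ h huv =>
    adj_of_reachable_representative hle hH huv
      (ConnectedComponent.exact ((Finite.equivFin _).injective h))⟩

end ColorfulSubgraph

end MCC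

theorem stmt8_general {V : Type*} [Fintype V] (G : SimpleGraph V) :
    sInf {k : ℕ | ∃ P : V → Fin k, ∀ u v : V, P u = P v → u ≠ v → G.Adj u v}
      = sInf {n : ℕ | ∃ H : SimpleGraph (mccVert G), H ≤ mccGraph G ∧
          (∀ x y : mccVert G, H.Reachable x y → mccColor G x = mccColor G y → x = y) ∧
          Nat.card H.ConnectedComponent = n} := by
  have hid : IsCliquePartition G (Fintype.equivFin V) :=
    isCliquePartition_of_injective (Fintype.equivFin V).injective
  apply le_antisymm
  · refine le_csInf ⟨_, _, classSubgraph_le, isColorful_classSubgraph hid, rfl⟩ ?_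
    rintro _ ⟨H, hle, hH, rfl⟩
    exact Nat.sInf_le (exists_isCliquePartition_of_isColorful hle hH)
  · refine le_csInf ⟨_, _, hid⟩ ?_
    rintro k ⟨P, hP⟩
    exact le_trans (Nat.sInf_le ⟨_, classSubgraph_le, isColorful_classSubgraph hP, rfl⟩)
      ((card_connectedComponent_classSubgraph_le hP).trans_eq (Nat.card_fin k))

/-- The minimum number of cliques in a clique partition of `G` equals the
minimum, over all edge-deleted subgraphs of the MCC reduction graph whose
components are all colorful, of the number of connected components. -/
theorem stmt8 {V : Type*} [Fintype V] [DecidableEq V] [Nonempty V]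
    (G : SimpleGraph V) :
    sInf {k : ℕ | ∃ P : V → Fin k, ∀ u v : V, P u = P v → u ≠ v → G.Adj u v}
      = sInf {n : ℕ | ∃ H : SimpleGraph (mccVert G), H ≤ mccGraph G ∧
          (∀ x y : mccVert G, H.Reachable x y → mccColor G x = mccColor G y → x = y) ∧
          Nat.card H.ConnectedComponent = n} :=
  stmt8_general G
end
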